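/- Let T ∈ B(H) be dissipative (Im(T) ≥ 0) with T⁻¹ ∈ B(H), and let log(T) = −i ∫₀^∞ dλ ((T + iλ I_H)⁻¹ − (1 + iλ)⁻¹ I_H) ∈ B(H). Then the imaginary part of log(T) satisfies the operator inequalities 0 ≤ Im(log(T)) ≤ π I_H. -/

import Mathlib

open Complex Filter MeasureTheory TopologicalSpace ContinuousLinearMap
open scoped InnerProductSpace Topology

noncomputable section

namespace SpectralShift

variable {H : Type*} [NormedAddCommGroup H] [InnerProductSpace ℂ H] [CompleteSpace H]

/-- The imaginary part `(T - T*)/(2i)` of a bounded operator. -/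
def imPart (T : H →L[ℂ] H) : H →L[ℂ] H :=
  ((2 * Complex.I)⁻¹ : ℂ) • (T - ContinuousLinearMap.adjoint T)

/-- An operator-valued Herglotz function: analytic on the open upper half-plane with
nonnegative imaginary part there. -/
def IsHerglotz (M : ℂ → H →L[ℂ] H) : Prop :=
  DifferentiableOn ℂ M {z : ℂ | 0 < z.im} ∧ ∀ z : ℂ, 0 < z.im → (imPart (M z)).IsPositive

/-- The integrand `(T + iλ)⁻¹ - (1 + iλ)⁻¹ I` in the integral representation of `log T`. -/
def logIntegrand (T : H →L[ℂ] H) (t : ℝ) : H →L[ℂ] H :=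
  Ring.inverse (T + ((t : ℂ) * Complex.I) • (1 : H →L[ℂ] H)) -
    (((1 : ℂ) + (t : ℂ) * Complex.I)⁻¹) • (1 : H →L[ℂ] H)

/-- `log T = -i ∫₀^∞ ((T + iλ)⁻¹ - (1 + iλ)⁻¹ I) dλ` as a norm-convergent improper
Riemann integral, for a dissipative boundedly invertible `T`. -/
def opLog (T : H →L[ℂ] H) : H →L[ℂ] H :=
  limUnder atTop (fun R : ℝ => (-Complex.I) • ∫ t in (0:ℝ)..R, logIntegrand T t)

/-- The logarithm `log S = (log S*)*` of an operator `S` with `-S` dissipative. -/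
def opLogAnti (T : H →L[ℂ] H) : H →L[ℂ] H :=
  ContinuousLinearMap.adjoint (opLog (ContinuousLinearMap.adjoint T))

/-- The logarithm of a Herglotz-type operator family on `ℂ ∖ ℝ`, using `log T` in the
upper half-plane and the convention `log S = (log S*)*` in the lower half-plane. -/
def logHerg (Φ : ℂ → H →L[ℂ] H) (z : ℂ) : H →L[ℂ] H :=
  if 0 < z.im then opLog (Φ z) else opLogAnti (Φ z)

/-- The logarithm of an anti-Herglotz-type operator family on `ℂ ∖ ℝ` (nonpositive
imaginary part in the upper half-plane). -/
def logAntiHerg (Φ : ℂ → H →L[ℂ] H) (z : ℂ) : H →L[ℂ] H :=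
  if 0 < z.im then opLogAnti (Φ z) else opLog (Φ z)

/-- Trace class: absolute summability of the diagonal in every Hilbert basis. -/
def IsTraceClass (T : H →L[ℂ] H) : Prop :=
  ∀ (w : Set H) (b : HilbertBasis w ℂ H), Summable fun i => ‖⟪(b i : H), T (b i)⟫_ℂ‖

/-- The trace, computed in a fixed Hilbert basis (basis-independent for trace
class operators). -/
def trH (T : H →L[ℂ] H) : ℂ :=
  ∑' i, ⟪((exists_hilbertBasis ℂ H).choose_spec.choose i : H),
    T ((exists_hilbertBasis ℂ H).choose_spec.choose i)⟫_ℂ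

/-- The trace norm, via duality with bounded operators (the correct value for trace
class operators). -/
def traceNorm (T : H →L[ℂ] H) : ℝ :=
  ⨆ B : {B : H →L[ℂ] H // ‖B‖ ≤ 1}, ‖trH (T * (B : H →L[ℂ] H))‖

/-- Hilbert-Schmidt operators. -/
def IsHilbertSchmidt (K : H →L[ℂ] H) : Prop :=
  ∀ (w : Set H) (b : HilbertBasis w ℂ H), Summable fun i => ‖K (b i)‖ ^ 2

/-- A (possibly unbounded) self-adjoint operator in `H`: a densely defined symmetric
operator possessing everywhere-defined bounded resolvents at every non-real point. -/
structure SelfAdjointOp (H : Type*) [NormedAddCommGroup H] [InnerProductSpace ℂ H]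
    [CompleteSpace H] where
  dom : Submodule ℂ H
  dense_dom : Dense (dom : Set H)
  op : dom →ₗ[ℂ] H
  symmetric : ∀ x y : dom, ⟪op x, (y : H)⟫_ℂ = ⟪(x : H), op y⟫_ℂ
  resolvent : ℂ → H →L[ℂ] H
  resolvent_mem : ∀ {z : ℂ}, z.im ≠ 0 → ∀ x : H, resolvent z x ∈ dom
  op_resolvent : ∀ {z : ℂ} (hz : z.im ≠ 0) (x : H),
    op ⟨resolvent z x, resolvent_mem hz x⟩ - z • resolvent z x = x
  resolvent_op : ∀ {z : ℂ} (hz : z.im ≠ 0) (x : dom),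
    resolvent z (op x - z • (x : H)) = x

/-- `B = A + V` for a bounded operator `V` (with `dom B = dom A`). -/
def IsSumOf (B A : SelfAdjointOp H) (V : H →L[ℂ] H) : Prop :=
  B.dom = A.dom ∧ ∀ (x : H) (hxB : x ∈ B.dom) (hxA : x ∈ A.dom),
    B.op ⟨x, hxB⟩ = A.op ⟨x, hxA⟩ + V x

/-- `R` is the (bounded, everywhere defined) resolvent `(A - z)⁻¹` of `A` at `z`. -/
def SelfAdjointOp.IsResolventAt (A : SelfAdjointOp H) (z : ℂ) (R : H →L[ℂ] H) : Prop :=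
  (∀ x : H, R x ∈ A.dom) ∧
  (∀ (x : H) (hx : R x ∈ A.dom), A.op ⟨R x, hx⟩ - z • R x = x) ∧
  (∀ x : A.dom, R (A.op x - z • (x : H)) = x)

/-- `E` is the projection-valued spectral measure of the self-adjoint operator `A`. -/
def IsSpectralMeasure (A : SelfAdjointOp H) (E : Set ℝ → H →L[ℂ] H) : Prop :=
  (∀ B : Set ℝ, MeasurableSet B → IsSelfAdjoint (E B)) ∧
  (∀ B C : Set ℝ, MeasurableSet B → MeasurableSet C → E B * E C = E (B ∩ C)) ∧
  (E Set.univ = 1) ∧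
  (∀ (f : ℕ → Set ℝ), (∀ n, MeasurableSet (f n)) → Pairwise (Function.onFun Disjoint f) →
    ∀ x : H, HasSum (fun n => E (f n) x) (E (⋃ n, f n) x)) ∧
  ∃ μ : H → Measure ℝ,
    (∀ (f : H) (B : Set ℝ), MeasurableSet B → μ f B = ENNReal.ofReal (⟪f, E B f⟫_ℂ).re) ∧
    ∀ (z : ℂ), z.im ≠ 0 → ∀ f : H,
      ⟪f, A.resolvent z f⟫_ℂ = ∫ l : ℝ, ((l : ℂ) - z)⁻¹ ∂(μ f)

/-- Invertibility of `T` restricted to the range of the orthogonal projection `P`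
(for `T` commuting with `P`), with inverse `S` supported in `ran P`. -/
def InvertibleOn (T P : H →L[ℂ] H) : Prop :=
  ∃ S : H →L[ℂ] H, S * P = S ∧ P * S = S ∧ S * (T * P) = P ∧ (P * T) * S = P

/-- The spectral projection `J₊ = (I + J)/2` onto `H₊` for a self-adjoint unitary `J`. -/
def Jplus (J : H →L[ℂ] H) : H →L[ℂ] H := ((2 : ℂ)⁻¹) • (1 + J)

/-- The spectral projection `J₋ = (I - J)/2` onto `H₋` for a self-adjoint unitary `J`. -/
def Jminus (J : H →L[ℂ] H) : H →L[ℂ] H := ((2 : ℂ)⁻¹) • (1 - J)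

/-- `Φ₊(z) = I + J₊ K* (H₀ - z)⁻¹ K J₊`, the operator on `H` inducing `Φ₊(z)` on `H₊`
(and the identity on `H₋`). -/
def PhiPlus (H0 : SelfAdjointOp H) (J K : H →L[ℂ] H) (z : ℂ) : H →L[ℂ] H :=
  1 + Jplus J * (ContinuousLinearMap.adjoint K * H0.resolvent z * K) * Jplus J

/-- `Φ̃₋(z) = I - J₋ K* (H₊ - z)⁻¹ K J₋`, the operator on `H` inducing `Φ̃₋(z)` on `H₋`
(and the identity on `H₊`). -/
def PhiMinusT (Hp : SelfAdjointOp H) (J K : H →L[ℂ] H) (z : ℂ) : H →L[ℂ] H :=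
  1 - Jminus J * (ContinuousLinearMap.adjoint K * Hp.resolvent z * K) * Jminus J


/-!
For `x : H` the function `q z = ⟪x, (T + z)⁻¹ x⟫` is holomorphic on the upper half-plane, has
`Im q ≤ 0` there because `T` is dissipative, and `q z = ‖x‖² / z + O(|z|⁻²)`. Taking inner
products in the integral defining `log T` gives
`Im ⟪x, log T x⟫ = (π / 2) ‖x‖² - ∫₀^∞ Re q(it) dt`, so it suffices to show
`|∫₀^∞ Re q(it) dt| ≤ (π / 2) ‖x‖²`. Cauchy's theorem on the rectangle with corners `iη` and
`X + iR` trades the integral over `[iη, iR]` for the other three sides: the bottom one has a sign,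
the top one is `O(X / R)`, and along `Re z = X` the asymptotics bound `Re q` by
`(X ‖x‖² + O(1)) / |z|²`, whose integral is at most `(π / 2) ‖x‖² + O(1 / X)`.
-/

open Set
open scoped Real ComplexConjugate Interval

section UpperHalfPlane

variable {f : ℂ → ℂ}

theorem integral_re_imaginaryAxis_eq_rect (hf : DifferentiableOn ℂ f {z | 0 < z.im})
    (X : ℝ) {η R : ℝ} (hη : 0 < η) (hηR : η ≤ R) :
    ∫ t in η..R, (f (t * I)).re =
      (∫ s in (0:ℝ)..X, (f (s + η * I)).im) - (∫ s in (0:ℝ)..X, (f (s + R * I)).im)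
        + ∫ t in η..R, (f (X + t * I)).re := by
  have hrect : [[0, X]] ×ℂ [[η, R]] ⊆ {z | 0 < z.im} := fun z hz =>
    hη.trans_le (uIcc_of_le hηR ▸ (mem_reProdIm.mp hz).2).1
  have hcont := (hf.mono hrect).continuousOn
  have hedge : ∀ {γ : ℝ → ℂ} {a b : ℝ}, Continuous γ → MapsTo γ [[a, b]] ([[0, X]] ×ℂ [[η, R]]) →
      IntervalIntegrable (f ∘ γ) volume a b :=
    fun hγ hmaps => (hcont.comp hγ.continuousOn hmaps).intervalIntegrable
  have hbot : ∫ s in (0:ℝ)..X, (f (s + η * I)).im = (∫ s in (0:ℝ)..X, f (s + η * I)).im :=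
    intervalIntegral.intervalIntegral_im
      (hedge (by fun_prop) fun s hs => by simp [mem_reProdIm, hs])
  have htop : ∫ s in (0:ℝ)..X, (f (s + R * I)).im = (∫ s in (0:ℝ)..X, f (s + R * I)).im :=
    intervalIntegral.intervalIntegral_im
      (hedge (by fun_prop) fun s hs => by simp [mem_reProdIm, hs])
  have hright : ∫ t in η..R, (f (X + t * I)).re = (∫ t in η..R, f (X + t * I)).re :=
    intervalIntegral.intervalIntegral_re
      (hedge (by fun_prop) fun t ht => by simp [mem_reProdIm, ht])
  have hleft : ∫ t in η..R, (f (t * I)).re = (∫ t in η..R, f (t * I)).re :=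
    intervalIntegral.intervalIntegral_re
      (hedge (by fun_prop) fun t ht => by simp [mem_reProdIm, ht])
  have key := congrArg im (integral_boundary_rect_eq_zero_of_differentiableOn f (η * I) (X + R * I)
    (by simpa using hf.mono hrect))
  simp only [mul_re, ofReal_re, I_re, mul_zero, ofReal_im, I_im, mul_one, sub_self, add_re,
    add_zero, mul_im, zero_add, add_im, ofReal_zero, smul_eq_mul, sub_im, zero_im] at key
  rw [hbot, htop, hright, hleft]
  linarith

theorem integral_inv_sq_add_sq_le {X : ℝ} (hX : 0 < X) {η : ℝ} (hη : 0 ≤ η) (R : ℝ) :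
    ∫ t in η..R, (X ^ 2 + t ^ 2)⁻¹ ≤ π / (2 * X) := by
  have hderiv : ∀ t ∈ [[η, R]], HasDerivAt (fun t => Real.arctan (t / X) / X) (X ^ 2 + t ^ 2)⁻¹ t :=
    fun t _ => (((hasDerivAt_id t).div_const X).arctan.div_const X).congr_deriv (by
      simp only [id]
      field_simp)
  have hint : IntervalIntegrable (fun t : ℝ => (X ^ 2 + t ^ 2)⁻¹) volume η R :=
    Continuous.intervalIntegrable (by fun_prop (disch := intro t; positivity)) _ _
  rw [intervalIntegral.integral_eq_sub_of_hasDerivAt hderiv hint]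
  have hR := Real.arctan_lt_pi_div_two (R / X)
  have hη' := Real.arctan_nonneg.mpr (div_nonneg hη hX.le)
  rw [← sub_div, div_le_div_iff₀ hX (by positivity)]
  nlinarith

variable {c D ρ : ℝ}

theorem integral_im_horizontal_nonpos (him : ∀ z : ℂ, 0 < z.im → (f z).im ≤ 0) {η X : ℝ}
    (hη : 0 < η) (hX : 0 ≤ X) : ∫ s in (0:ℝ)..X, (f (s + η * I)).im ≤ 0 := by
  have := intervalIntegral.integral_nonneg_of_forall (μ := volume) hX
    fun s => neg_nonneg.mpr (him (s + η * I) (by simpa using hη))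
  rwa [intervalIntegral.integral_neg, neg_nonneg] at this

theorem abs_integral_im_horizontal_le (hc : 0 ≤ c) (hD : 0 ≤ D)
    (hasym : ∀ z : ℂ, 0 < z.im → ρ ≤ ‖z‖ → ‖f z - c / z‖ ≤ D / ‖z‖ ^ 2)
    {R : ℝ} (hR : 0 < R) (hρR : ρ ≤ R) (X : ℝ) :
    |∫ s in (0:ℝ)..X, (f (s + R * I)).im| ≤ |X| * (c / R + D / R ^ 2) := by
  have hbound : ∀ s : ℝ, ‖(f (s + R * I)).im‖ ≤ c / R + D / R ^ 2 := fun s => by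
    set z : ℂ := s + R * I
    have hRz : R ≤ ‖z‖ := by simpa [z] using im_le_norm z
    have hz := hasym z (by simpa [z] using hR) (hρR.trans hRz)
    calc ‖(f z).im‖ ≤ ‖f z‖ := abs_im_le_norm _
      _ ≤ ‖(c : ℂ) / z‖ + ‖f z - c / z‖ := norm_le_norm_add_norm_sub' _ _
      _ ≤ c / ‖z‖ + D / ‖z‖ ^ 2 := by
        rw [norm_div, norm_real, Real.norm_of_nonneg hc]
        gcongr
      _ ≤ c / R + D / R ^ 2 := by gcongr
  simpa [mul_comm |X|] using intervalIntegral.norm_integral_le_of_norm_le_const (a := 0) (b := X)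
    fun s _ => hbound s

theorem re_le_of_norm_sub_div_le {w z : ℂ} (h : ‖w - c / z‖ ≤ D / ‖z‖ ^ 2) :
    w.re ≤ (c * z.re + D) / ‖z‖ ^ 2 := by
  have hre : ((c : ℂ) / z).re = c * z.re / ‖z‖ ^ 2 := by
    rw [div_re, ofReal_re, ofReal_im, zero_mul, zero_div, add_zero, normSq_eq_norm_sq]
  calc w.re = ((c : ℂ) / z).re + (w - c / z).re := by simp
    _ ≤ c * z.re / ‖z‖ ^ 2 + D / ‖z‖ ^ 2 := by
      rw [hre]
      gcongr
      exact (re_le_norm _).trans h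
    _ = (c * z.re + D) / ‖z‖ ^ 2 := by ring

theorem integral_re_vertical_le (hf : DifferentiableOn ℂ f {z | 0 < z.im}) (hc : 0 ≤ c)
    (hD : 0 ≤ D) (hasym : ∀ z : ℂ, 0 < z.im → ρ ≤ ‖z‖ → ‖f z - c / z‖ ≤ D / ‖z‖ ^ 2)
    {X : ℝ} (hX : 0 < X) (hρX : ρ ≤ X) {η R : ℝ} (hη : 0 < η) (hηR : η ≤ R) :
    ∫ t in η..R, (f (X + t * I)).re ≤ (c * X + D) * (π / (2 * X)) := by
  have hmaps : MapsTo (fun t : ℝ => (X + t * I : ℂ)) [[η, R]] {z | 0 < z.im} := fun t ht => by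
    simpa using hη.trans_le (uIcc_of_le hηR ▸ ht).1
  have hpoint : ∀ t ∈ Icc η R, (f (X + t * I)).re ≤ (c * X + D) * (X ^ 2 + t ^ 2)⁻¹ := by
    intro t ht
    have hz : ‖(X + t * I : ℂ)‖ ^ 2 = X ^ 2 + t ^ 2 := by
      rw [← normSq_eq_norm_sq, normSq_add_mul_I]
    have hρz : ρ ≤ ‖(X + t * I : ℂ)‖ := hρX.trans (by simpa using re_le_norm (X + t * I : ℂ))
    simpa [hz, div_eq_mul_inv] using re_le_of_norm_sub_div_le
      (hasym _ (hmaps (uIcc_of_le hηR ▸ ht)) hρz)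
  calc ∫ t in η..R, (f (X + t * I)).re
      ≤ ∫ t in η..R, (c * X + D) * (X ^ 2 + t ^ 2)⁻¹ := by
        refine intervalIntegral.integral_mono_on hηR ?_ ?_ hpoint
        · exact (continuous_re.comp_continuousOn
            (hf.continuousOn.comp (by fun_prop) hmaps)).intervalIntegrable
        · exact Continuous.intervalIntegrable
            (by fun_prop (disch := intro t; nlinarith [sq_nonneg t])) _ _
    _ ≤ (c * X + D) * (π / (2 * X)) := by
        rw [intervalIntegral.integral_const_mul]
        gcongr
        exact integral_inv_sq_add_sq_le hX hη.le R

theorem intervalIntegral_re_imaginaryAxis_le (hf : DifferentiableOn ℂ f {z | 0 < z.im})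
    (him : ∀ z : ℂ, 0 < z.im → (f z).im ≤ 0) (hc : 0 ≤ c) (hD : 0 ≤ D)
    (hasym : ∀ z : ℂ, 0 < z.im → ρ ≤ ‖z‖ → ‖f z - c / z‖ ≤ D / ‖z‖ ^ 2)
    (hint : IntegrableOn (fun t : ℝ => (f (t * I)).re) (Ioi 0))
    {X : ℝ} (hX : 0 < X) (hρX : ρ ≤ X) {R : ℝ} (hR : 0 < R) (hρR : ρ ≤ R) :
    ∫ t in (0:ℝ)..R, (f (t * I)).re ≤ X * (c / R + D / R ^ 2) + (c * X + D) * (π / (2 * X)) := by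
  have hrect : ∀ η ∈ Ioc 0 R,
      ∫ t in η..R, (f (t * I)).re ≤ X * (c / R + D / R ^ 2) + (c * X + D) * (π / (2 * X)) := by
    intro η hη
    rw [integral_re_imaginaryAxis_eq_rect hf X hη.1 hη.2]
    have hbot := integral_im_horizontal_nonpos him hη.1 hX.le
    have htop := abs_le.mp (abs_integral_im_horizontal_le hc hD hasym hR hρR X)
    have hright := integral_re_vertical_le hf hc hD hasym hX hρX hη.1 hη.2
    rw [abs_of_pos hX] at htop
    linarith [htop.1]
  have hcont := intervalIntegral.continuousOn_primitive_interval_left (a := 0) (b := R)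
    (μ := volume) (f := fun t : ℝ => (f (t * I)).re) (by
      rw [uIcc_of_le hR.le, integrableOn_Icc_iff_integrableOn_Ioc enorm_ne_top]
      exact hint.mono_set Ioc_subset_Ioi_self)
  rw [uIcc_of_le hR.le] at hcont
  refine le_of_tendsto (((hcont 0 (left_mem_Icc.mpr hR.le)).mono_of_mem_nhdsWithin
    (Icc_mem_nhdsGT hR)).tendsto) ?_
  filter_upwards [Ioc_mem_nhdsGT hR] with η hη using hrect η hη

theorem integral_re_imaginaryAxis_le (hf : DifferentiableOn ℂ f {z | 0 < z.im})
    (him : ∀ z : ℂ, 0 < z.im → (f z).im ≤ 0) (hc : 0 ≤ c) (hD : 0 ≤ D)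
    (hasym : ∀ z : ℂ, 0 < z.im → ρ ≤ ‖z‖ → ‖f z - c / z‖ ≤ D / ‖z‖ ^ 2)
    (hint : IntegrableOn (fun t : ℝ => (f (t * I)).re) (Ioi 0)) :
    ∫ t : ℝ in Ioi 0, (f (t * I)).re ≤ c * π / 2 := by
  have hray : ∀ X, 0 < X → ρ ≤ X →
      ∫ t : ℝ in Ioi 0, (f (t * I)).re ≤ (c * X + D) * (π / (2 * X)) := by
    intro X hX hρX
    have hdecay : Tendsto (fun R : ℝ => c / R + D / R ^ 2) atTop (𝓝 0) := by
      simpa using (tendsto_const_nhds.div_atTop tendsto_id).add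
        (tendsto_const_nhds.div_atTop (tendsto_pow_atTop (α := ℝ) two_ne_zero))
    refine le_of_tendsto_of_tendsto (intervalIntegral_tendsto_integral_Ioi 0 hint tendsto_id)
      (by simpa using (hdecay.const_mul X).add_const ((c * X + D) * (π / (2 * X)))) ?_
    filter_upwards [eventually_gt_atTop 0, eventually_ge_atTop ρ] with R hR hρR
      using intervalIntegral_re_imaginaryAxis_le hf him hc hD hasym hint hX hρX hR hρR
  have hlim : Tendsto (fun X : ℝ => (c * X + D) * (π / (2 * X))) atTop (𝓝 (c * π / 2)) := by
    have : Tendsto (fun X : ℝ => c * π / 2 + D * π / 2 * X⁻¹) atTop (𝓝 (c * π / 2)) := by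
      simpa using (tendsto_inv_atTop_zero.const_mul (D * π / 2)).const_add (c * π / 2)
    refine this.congr' ?_
    filter_upwards [eventually_gt_atTop 0] with X hX
    field_simp
  refine ge_of_tendsto hlim ?_
  filter_upwards [eventually_gt_atTop 0, eventually_ge_atTop ρ] with X hX hρX using hray X hX hρX

theorem integral_re_imaginaryAxis_ge (hf : DifferentiableOn ℂ f {z | 0 < z.im})
    (him : ∀ z : ℂ, 0 < z.im → (f z).im ≤ 0) (hc : 0 ≤ c) (hD : 0 ≤ D)
    (hasym : ∀ z : ℂ, 0 < z.im → ρ ≤ ‖z‖ → ‖f z - c / z‖ ≤ D / ‖z‖ ^ 2)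
    (hint : IntegrableOn (fun t : ℝ => (f (t * I)).re) (Ioi 0)) :
    -(c * π / 2) ≤ ∫ t : ℝ in Ioi 0, (f (t * I)).re := by
  have hopen : IsOpen {z : ℂ | 0 < z.im} := isOpen_lt continuous_const continuous_im
  -- the reflection satisfies the same hypotheses and negates `Re f` on the imaginary axis
  have hrefl : DifferentiableOn ℂ (fun z => -conj (f (-conj z))) {z | 0 < z.im} := fun z hz => by
    have : DifferentiableAt ℂ (fun w => f (-w)) (conj z) :=
      (hf.differentiableAt (hopen.mem_nhds (by simpa using hz))).comp _ differentiableAt_id.neg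
    exact (differentiableAt_conj_conj_iff.mpr this).neg.differentiableWithinAt
  have := integral_re_imaginaryAxis_le hrefl (fun z hz => by simpa using him _ (by simpa using hz))
    hc hD (fun z hz hρz => by
      have h := hasym (-conj z) (by simpa using hz) (by simpa using hρz)
      have hrefl_sub : -conj (f (-conj z)) - c / z = -conj (f (-conj z) - c / -conj z) := by
        rw [div_neg, sub_neg_eq_add, map_add, map_div₀, conj_ofReal, conj_conj]
        ring
      rw [hrefl_sub, norm_neg, RCLike.norm_conj]
      simpa using h)
    (by simpa using hint.neg)
  simp only [map_mul, conj_ofReal, conj_I, mul_neg, neg_neg, neg_re, conj_re, integral_neg] at this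
  linarith

theorem abs_integral_re_imaginaryAxis_le (hf : DifferentiableOn ℂ f {z | 0 < z.im})
    (him : ∀ z : ℂ, 0 < z.im → (f z).im ≤ 0) (hc : 0 ≤ c) (hD : 0 ≤ D)
    (hasym : ∀ z : ℂ, 0 < z.im → ρ ≤ ‖z‖ → ‖f z - c / z‖ ≤ D / ‖z‖ ^ 2)
    (hint : IntegrableOn (fun t : ℝ => (f (t * I)).re) (Ioi 0)) :
    |∫ t : ℝ in Ioi 0, (f (t * I)).re| ≤ c * π / 2 :=
  abs_le.mpr ⟨integral_re_imaginaryAxis_ge hf him hc hD hasym hint,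
    integral_re_imaginaryAxis_le hf him hc hD hasym hint⟩

end UpperHalfPlane

theorem reApplyInnerSelf_imPart (S : H →L[ℂ] H) (y : H) :
    (imPart S).reApplyInnerSelf y = (⟪y, S y⟫_ℂ).im := by
  rw [reApplyInnerSelf_apply, ← inner_conj_symm, RCLike.conj_re, imPart, smul_apply, sub_apply,
    inner_smul_right, inner_sub_right, adjoint_inner_right, ← inner_conj_symm (S y) y,
    sub_conj, RCLike.re_to_complex]
  simp

theorem isSelfAdjoint_imPart (S : H →L[ℂ] H) : IsSelfAdjoint (imPart S) := by
  have hconj : star (2 * I)⁻¹ = -(2 * I)⁻¹ := by simp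
  simp only [IsSelfAdjoint, imPart, star_smul, star_sub, star_eq_adjoint, adjoint_adjoint, hconj,
    neg_smul, ← smul_neg, neg_sub]

theorem isPositive_imPart_iff (S : H →L[ℂ] H) :
    (imPart S).IsPositive ↔ ∀ y, 0 ≤ (⟪y, S y⟫_ℂ).im := by
  simp_rw [isPositive_def', reApplyInnerSelf_imPart, and_iff_right (isSelfAdjoint_imPart S)]

theorem isPositive_smul_one_sub_imPart_iff (r : ℝ) (S : H →L[ℂ] H) :
    ((r : ℂ) • (1 : H →L[ℂ] H) - imPart S).IsPositive ↔ ∀ y, (⟪y, S y⟫_ℂ).im ≤ r * ‖y‖ ^ 2 := by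
  have hsa : IsSelfAdjoint ((r : ℂ) • (1 : H →L[ℂ] H) - imPart S) :=
    (IsSelfAdjoint.smul (conj_ofReal r) (IsSelfAdjoint.one _)).sub (isSelfAdjoint_imPart S)
  rw [isPositive_def', and_iff_right hsa]
  refine forall_congr' fun y => ?_
  rw [reApplyInnerSelf_apply, sub_apply, inner_sub_left, map_sub,
    ← reApplyInnerSelf_apply (imPart S), reApplyInnerSelf_imPart, sub_nonneg, smul_apply,
    one_apply_eq_self, inner_smul_left, conj_ofReal, inner_self_eq_norm_sq_to_K]
  simp [← ofReal_pow]

theorem norm_ringInverse_le_of_forall_mul_norm_le {𝕜 E : Type*} [NontriviallyNormedField 𝕜]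
    [NormedAddCommGroup E] [NormedSpace 𝕜 E] {A : E →L[𝕜] E} (hA : IsUnit A) {c : ℝ}
    (hc : 0 < c) (h : ∀ y, c * ‖y‖ ≤ ‖A y‖) : ‖Ring.inverse A‖ ≤ c⁻¹ := by
  refine opNorm_le_bound _ (inv_nonneg.mpr hc.le) fun v => ?_
  have hv : A (Ring.inverse A v) = v := by
    simpa using congr($(Ring.mul_inverse_cancel A hA) v)
  have := h (Ring.inverse A v)
  rw [hv] at this
  rwa [inv_mul_eq_div, le_div_iff₀ hc, mul_comm]

def resolventForm (T : H →L[ℂ] H) (x : H) (z : ℂ) : ℂ :=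
  ⟪x, Ring.inverse (T + z • (1 : H →L[ℂ] H)) x⟫_ℂ

theorem re_inner_logIntegrand_apply (T : H →L[ℂ] H) (x : H) (t : ℝ) :
    (⟪x, logIntegrand T t x⟫_ℂ).re = (resolventForm T x (t * I)).re - ‖x‖ ^ 2 * (1 + t ^ 2)⁻¹ := by
  rw [logIntegrand, sub_apply, inner_sub_right, smul_apply, one_apply_eq_self, inner_smul_right,
    inner_self_eq_norm_sq_to_K, sub_re, RCLike.ofReal_eq_complex_ofReal, ← ofReal_pow,
    re_mul_ofReal, inv_re, ← ofReal_one, normSq_add_mul_I]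
  simp [resolventForm, div_eq_mul_inv, mul_comm]

section Dissipative

variable {T : H →L[ℂ] H}

theorem im_inner_add_smul_one_apply_ge (hT : (imPart T).IsPositive) (z : ℂ) (y : H) :
    z.im * ‖y‖ ^ 2 ≤ (⟪y, (T + z • (1 : H →L[ℂ] H)) y⟫_ℂ).im := by
  have := (isPositive_imPart_iff T).mp hT y
  rw [add_apply, smul_apply, one_apply_eq_self, inner_add_right, inner_smul_right,
    inner_self_eq_norm_sq_to_K]
  simpa [← ofReal_pow] using this

theorem mul_norm_le_norm_add_smul_one_apply (hT : (imPart T).IsPositive) (z : ℂ) (y : H) :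
    z.im * ‖y‖ ≤ ‖(T + z • (1 : H →L[ℂ] H)) y‖ := by
  rcases (norm_nonneg y).eq_or_lt with hy | hy
  · simp [← hy]
  refine le_of_mul_le_mul_right ?_ hy
  calc z.im * ‖y‖ * ‖y‖ ≤ (⟪y, (T + z • (1 : H →L[ℂ] H)) y⟫_ℂ).im := by
        nlinarith [im_inner_add_smul_one_apply_ge hT z y]
    _ ≤ ‖y‖ * ‖(T + z • (1 : H →L[ℂ] H)) y‖ := (im_le_norm _).trans (norm_inner_le_norm _ _)
    _ = _ := mul_comm _ _

theorem isUnit_add_smul_one (hT : (imPart T).IsPositive) {z : ℂ} (hz : 0 < z.im) :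
    IsUnit (T + z • (1 : H →L[ℂ] H)) :=
  isUnit_of_forall_le_norm_inner_map _ (c := ⟨z.im, hz.le⟩) hz fun y => by
    rw [← norm_inner_symm, mul_comm]
    exact (im_inner_add_smul_one_apply_ge hT z y).trans (im_le_norm _)

theorem norm_ringInverse_add_smul_one_le (hT : (imPart T).IsPositive) {z : ℂ} (hz : 0 < z.im) :
    ‖Ring.inverse (T + z • (1 : H →L[ℂ] H))‖ ≤ z.im⁻¹ :=
  norm_ringInverse_le_of_forall_mul_norm_le (isUnit_add_smul_one hT hz) hz
    (mul_norm_le_norm_add_smul_one_apply hT z)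

theorem norm_ringInverse_add_smul_one_le_of_norm_le (hT : (imPart T).IsPositive) {z : ℂ}
    (hz : 0 < z.im) (hzT : 2 * ‖T‖ ≤ ‖z‖) :
    ‖Ring.inverse (T + z • (1 : H →L[ℂ] H))‖ ≤ 2 / ‖z‖ := by
  have hz0 : 0 < ‖z‖ := norm_pos_iff.mpr fun h => by simp [h] at hz
  rw [← inv_div]
  refine norm_ringInverse_le_of_forall_mul_norm_le (isUnit_add_smul_one hT hz) (by positivity)
    fun y => ?_
  have : ‖z‖ * ‖y‖ ≤ ‖(T + z • (1 : H →L[ℂ] H)) y‖ + ‖T‖ * ‖y‖ :=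
    calc ‖z‖ * ‖y‖ = ‖(T + z • (1 : H →L[ℂ] H)) y - T y‖ := by simp [norm_smul]
      _ ≤ _ := (norm_sub_le _ _).trans (add_le_add_right (T.le_opNorm y) _)
  nlinarith [norm_nonneg y]

theorem differentiableOn_resolventForm (hT : (imPart T).IsPositive) (x : H) :
    DifferentiableOn ℂ (resolventForm T x) {z | 0 < z.im} :=
  ((innerSL ℂ x).comp (apply ℂ H x)).differentiable.comp_differentiableOn
    (DifferentiableOn.inverse (by fun_prop) fun _ hz => isUnit_add_smul_one hT hz)

theorem im_resolventForm_nonpos (hT : (imPart T).IsPositive) (x : H) {z : ℂ} (hz : 0 < z.im) :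
    (resolventForm T x z).im ≤ 0 := by
  set u := Ring.inverse (T + z • (1 : H →L[ℂ] H)) x
  have hu : (T + z • (1 : H →L[ℂ] H)) u = x := by
    simpa using congr($(Ring.mul_inverse_cancel _ (isUnit_add_smul_one hT hz)) x)
  have hform : resolventForm T x z = conj ⟪u, (T + z • (1 : H →L[ℂ] H)) u⟫_ℂ := by
    rw [hu, inner_conj_symm]
    rfl
  have := im_inner_add_smul_one_apply_ge hT z u
  rw [hform, conj_im, neg_nonpos]
  exact (by positivity : 0 ≤ z.im * ‖u‖ ^ 2).trans this

theorem norm_resolventForm_sub_le (hT : (imPart T).IsPositive) (x : H) {z : ℂ} (hz : 0 < z.im)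
    (hzT : 2 * ‖T‖ ≤ ‖z‖) :
    ‖resolventForm T x z - ((‖x‖ ^ 2 : ℝ) : ℂ) / z‖ ≤ 2 * ‖T‖ * ‖x‖ ^ 2 / ‖z‖ ^ 2 := by
  have hz0 : z ≠ 0 := fun h => by simp [h] at hz
  set B := Ring.inverse (T + z • (1 : H →L[ℂ] H))
  have hB : z • B x = x - B (T x) := by
    have := congr($(Ring.inverse_mul_cancel _ (isUnit_add_smul_one hT hz)) x)
    simp only [mul_apply_eq_comp, add_apply, smul_apply, one_apply_eq_self, map_add,
      map_smul] at this
    exact eq_sub_of_add_eq' this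
  have hdiff : resolventForm T x z - ((‖x‖ ^ 2 : ℝ) : ℂ) / z = -(z⁻¹ * ⟪x, B (T x)⟫_ℂ) := by
    have : B x = z⁻¹ • (x - B (T x)) := by rw [← hB, inv_smul_smul₀ hz0]
    rw [resolventForm, this, inner_smul_right, inner_sub_right, inner_self_eq_norm_sq_to_K,
      RCLike.ofReal_eq_complex_ofReal]
    push_cast
    ring
  have hBTx : ‖B (T x)‖ ≤ 2 / ‖z‖ * (‖T‖ * ‖x‖) :=
    (B.le_opNorm _).trans (mul_le_mul (norm_ringInverse_add_smul_one_le_of_norm_le hT hz hzT)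
      (T.le_opNorm x) (by positivity) (by positivity))
  rw [hdiff, norm_neg, norm_mul, norm_inv]
  calc ‖z‖⁻¹ * ‖⟪x, B (T x)⟫_ℂ‖ ≤ ‖z‖⁻¹ * (‖x‖ * (2 / ‖z‖ * (‖T‖ * ‖x‖))) := by
        gcongr
        exact (norm_inner_le_norm _ _).trans (by gcongr)
    _ = 2 * ‖T‖ * ‖x‖ ^ 2 / ‖z‖ ^ 2 := by
        field_simp

theorem isUnit_add_imaginary_smul_one (hT : (imPart T).IsPositive) (hTinv : IsUnit T) {t : ℝ}
    (ht : 0 ≤ t) : IsUnit (T + ((t : ℂ) * I) • (1 : H →L[ℂ] H)) := by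
  rcases ht.eq_or_lt with rfl | ht
  · simpa using hTinv
  · exact isUnit_add_smul_one hT (by simpa using ht)

theorem continuousOn_logIntegrand (hT : (imPart T).IsPositive) (hTinv : IsUnit T) :
    ContinuousOn (logIntegrand T) (Ici 0) := by
  intro t ht
  have hinv : ContinuousAt (fun w : ℂ => Ring.inverse (T + w • (1 : H →L[ℂ] H))) (t * I) :=
    ((by fun_prop : Differentiable ℂ fun w : ℂ => T + w • (1 : H →L[ℂ] H)) _ |>.inverse
      (isUnit_add_imaginary_smul_one hT hTinv ht)).continuousAt
  have hne : (1 : ℂ) + t * I ≠ 0 := fun h => by simpa using congrArg re h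
  have hscalar : ContinuousAt (fun s : ℝ => ((1 : ℂ) + s * I)⁻¹ • (1 : H →L[ℂ] H)) t :=
    by fun_prop (disch := exact hne)
  exact ((ContinuousAt.comp (f := fun s : ℝ => (s : ℂ) * I) hinv (by fun_prop)).sub
    hscalar).continuousWithinAt

theorem norm_logIntegrand_le (hT : (imPart T).IsPositive) {t : ℝ} (ht : 0 < t) :
    ‖logIntegrand T t‖ ≤ (1 + ‖T‖) / t ^ 2 := by
  set B := Ring.inverse (T + ((t : ℂ) * I) • (1 : H →L[ℂ] H))
  have hunit := isUnit_add_smul_one hT (z := t * I) (by simpa using ht)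
  have hne : (1 : ℂ) + t * I ≠ 0 := fun h => by simpa using congrArg re h
  have hform : logIntegrand T t = ((1 : ℂ) + t * I)⁻¹ • (B * (1 - T)) := by
    have hBT : B * T = 1 - ((t : ℂ) * I) • B := by
      rw [← Ring.inverse_mul_cancel _ hunit, mul_add, mul_smul_comm, mul_one, add_sub_cancel_right]
    rw [mul_sub, mul_one, hBT, logIntegrand,
      show B - (1 - ((t : ℂ) * I) • B) = ((1 : ℂ) + t * I) • B - 1 by module, smul_sub, smul_smul,
      inv_mul_cancel₀ hne, one_smul]
  have hB : ‖B‖ ≤ t⁻¹ := by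
    simpa using norm_ringInverse_add_smul_one_le hT (z := t * I) (by simpa using ht)
  have hscalar : ‖((1 : ℂ) + t * I)⁻¹‖ ≤ t⁻¹ := by
    rw [norm_inv]
    exact inv_anti₀ ht (by simpa using im_le_norm ((1 : ℂ) + t * I))
  rw [hform, norm_smul]
  calc ‖((1 : ℂ) + t * I)⁻¹‖ * ‖B * (1 - T)‖ ≤ t⁻¹ * (t⁻¹ * (1 + ‖T‖)) := by
        gcongr
        exact (norm_mul_le _ _).trans (mul_le_mul hB ((norm_sub_le _ _).trans
          (by rw [one_def]; gcongr; exact norm_id_le)) (by positivity) (by positivity))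
    _ = (1 + ‖T‖) / t ^ 2 := by field_simp

theorem integrableOn_logIntegrand (hT : (imPart T).IsPositive) (hTinv : IsUnit T) :
    IntegrableOn (logIntegrand T) (Ioi 0) := by
  have hcont := continuousOn_logIntegrand hT hTinv
  rw [← Ioc_union_Ioi_eq_Ioi zero_le_one]
  refine IntegrableOn.union ((hcont.mono Icc_subset_Ici_self).integrableOn_Icc.mono_set
    Ioc_subset_Icc_self) ?_
  refine (integrable_inv_one_add_sq.integrableOn.const_mul (2 * (1 + ‖T‖))).mono'
    ((hcont.mono (Ioi_subset_Ici zero_le_one)).aestronglyMeasurable measurableSet_Ioi)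
    ((ae_restrict_iff' measurableSet_Ioi).mpr (ae_of_all _ fun t (ht : 1 < t) => ?_))
  calc ‖logIntegrand T t‖ ≤ (1 + ‖T‖) / t ^ 2 := norm_logIntegrand_le hT (zero_lt_one.trans ht)
    _ ≤ 2 * (1 + ‖T‖) * (1 + t ^ 2)⁻¹ := by
      rw [← div_eq_mul_inv, div_le_div_iff₀ (by positivity) (by positivity)]
      nlinarith [mul_nonneg (by positivity : (0:ℝ) ≤ 1 + ‖T‖) (by nlinarith : (0:ℝ) ≤ t ^ 2 - 1)]

theorem opLog_eq_integral (hT : (imPart T).IsPositive) (hTinv : IsUnit T) :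
    opLog T = (-I) • ∫ t in Ioi 0, logIntegrand T t :=
  ((intervalIntegral_tendsto_integral_Ioi 0 (integrableOn_logIntegrand hT hTinv)
    tendsto_id).const_smul (-I)).limUnder_eq

theorem integrableOn_inner_logIntegrand_apply (hT : (imPart T).IsPositive) (hTinv : IsUnit T)
    (x : H) : IntegrableOn (fun t => ⟪x, logIntegrand T t x⟫_ℂ) (Ioi 0) :=
  ((innerSL ℂ x).comp (apply ℂ H x)).integrable_comp (integrableOn_logIntegrand hT hTinv)

theorem integrableOn_re_resolventForm (hT : (imPart T).IsPositive) (hTinv : IsUnit T) (x : H) :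
    IntegrableOn (fun t : ℝ => (resolventForm T x (t * I)).re) (Ioi 0) := by
  have hsum : IntegrableOn (fun t : ℝ => (⟪x, logIntegrand T t x⟫_ℂ).re + ‖x‖ ^ 2 * (1 + t ^ 2)⁻¹)
      (Ioi 0) := (integrableOn_inner_logIntegrand_apply hT hTinv x).re.add
    (integrable_inv_one_add_sq.integrableOn.const_mul (‖x‖ ^ 2))
  refine hsum.congr_fun (fun t _ => ?_) measurableSet_Ioi
  simp only [re_inner_logIntegrand_apply, sub_add_cancel]

theorem im_inner_opLog_apply (hT : (imPart T).IsPositive) (hTinv : IsUnit T) (x : H) :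
    (⟪x, opLog T x⟫_ℂ).im = π / 2 * ‖x‖ ^ 2 - ∫ t : ℝ in Ioi 0, (resolventForm T x (t * I)).re := by
  have hcomm :
      ⟪x, (∫ t in Ioi 0, logIntegrand T t) x⟫_ℂ = ∫ t in Ioi 0, ⟪x, logIntegrand T t x⟫_ℂ :=
    (((innerSL ℂ x).comp (apply ℂ H x)).integral_comp_comm
      (integrableOn_logIntegrand hT hTinv)).symm
  have hre : (∫ t in Ioi 0, ⟪x, logIntegrand T t x⟫_ℂ).re
      = ∫ t in Ioi 0, (⟪x, logIntegrand T t x⟫_ℂ).re :=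
    (integral_re (integrableOn_inner_logIntegrand_apply hT hTinv x)).symm
  rw [opLog_eq_integral hT hTinv, smul_apply, inner_smul_right, hcomm, neg_mul, neg_im, I_mul_im,
    hre]
  simp_rw [re_inner_logIntegrand_apply]
  rw [integral_sub (integrableOn_re_resolventForm hT hTinv x)
    (integrable_inv_one_add_sq.integrableOn.const_mul _), integral_const_mul,
    integral_Ioi_inv_one_add_sq, Real.arctan_zero]
  ring

theorem abs_integral_re_resolventForm_le (hT : (imPart T).IsPositive) (hTinv : IsUnit T) (x : H) :
    |∫ t : ℝ in Ioi 0, (resolventForm T x (t * I)).re| ≤ ‖x‖ ^ 2 * π / 2 :=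
  abs_integral_re_imaginaryAxis_le (differentiableOn_resolventForm hT x)
    (fun _ hz => im_resolventForm_nonpos hT x hz) (by positivity) (by positivity)
    (fun _ hz hzT => norm_resolventForm_sub_le hT x hz hzT)
    (integrableOn_re_resolventForm hT hTinv x)

end Dissipative

theorem imPart_opLog_bounds_general
    (T : H →L[ℂ] H) (hT : (imPart T).IsPositive) (hTinv : IsUnit T) :
    (imPart (opLog T)).IsPositive ∧
    (((Real.pi : ℂ) • (1 : H →L[ℂ] H)) - imPart (opLog T)).IsPositive := by
  have hbound := fun x => abs_le.mp (abs_integral_re_resolventForm_le hT hTinv x)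
  refine ⟨(isPositive_imPart_iff _).mpr fun x => ?_,
    (isPositive_smul_one_sub_imPart_iff π _).mpr fun x => ?_⟩ <;>
  · rw [im_inner_opLog_apply hT hTinv x]
    linarith [hbound x]

/-- Lemma 2.5 (consequence): `0 ≤ Im (log T) ≤ π I` for dissipative boundedly
invertible `T`. -/
theorem imPart_opLog_bounds [SeparableSpace H]
    (T : H →L[ℂ] H) (hT : (imPart T).IsPositive) (hTinv : IsUnit T) :
    (imPart (opLog T)).IsPositive ∧
    (((Real.pi : ℂ) • (1 : H →L[ℂ] H)) - imPart (opLog T)).IsPositive :=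
  imPart_opLog_bounds_general T hT hTinv

end SpectralShift
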